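/- arXiv:1503.08807 — 3 statements merged into one kernel-verified Lean document; each statement's English description precedes it below -/
import Mathlib

section
/- Let c : ℝ → ℝ be smooth with c(v) ≥ c₀ > 0, and let u, w, z, p, q, x, t : ℝ² → ℝ be smooth functions solving the semilinear system. Let (X₀,Y₀) be a point where w(X₀,Y₀) = π, and write z₀ = z(X₀,Y₀), p₀ = p(X₀,Y₀), q₀ = q(X₀,Y₀). Then at (X₀,Y₀): x_X = 0; x_Y = −(1+cos z₀)·q₀/4; x_XX = 0; x_XY = 0; and x_XXX = w_X(X₀,Y₀)²·p₀/4. -/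
/-!
Since `x_X = (1 + cos w) p / 4` and the factor `1 + cos w` vanishes to second order where
`w = π` (its first derivative `-sin w · w_X` vanishes there too, while its second one is
`w_X²`), every first derivative of `x_X` vanishes at such a point and `x_XXX = w_X² p / 4`.
-/

/-- Partial derivative in the `X`-direction. -/
noncomputable def dX (f : ℝ × ℝ → ℝ) (P : ℝ × ℝ) : ℝ := fderiv ℝ f P (1, 0)

/-- Partial derivative in the `Y`-direction. -/
noncomputable def dY (f : ℝ × ℝ → ℝ) (P : ℝ × ℝ) : ℝ := fderiv ℝ f P (0, 1)

/-- The semilinear system associated with the wave equation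
`u_tt - c(u)(c(u)u_x)_x = 0`, in characteristic coordinates `(X,Y)`. -/
def SolvesSystem (c : ℝ → ℝ) (u w z p q x t : ℝ × ℝ → ℝ) : Prop :=
  ∀ P : ℝ × ℝ,
    dX u P = Real.sin (w P) * p P / (4 * c (u P)) ∧
    dY u P = Real.sin (z P) * q P / (4 * c (u P)) ∧
    dY w P = deriv c (u P) / (8 * c (u P) ^ 2) * (Real.cos (z P) - Real.cos (w P)) * q P ∧
    dX z P = deriv c (u P) / (8 * c (u P) ^ 2) * (Real.cos (w P) - Real.cos (z P)) * p P ∧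
    dY p P = deriv c (u P) / (8 * c (u P) ^ 2) * (Real.sin (z P) - Real.sin (w P)) * (p P * q P) ∧
    dX q P = deriv c (u P) / (8 * c (u P) ^ 2) * (Real.sin (w P) - Real.sin (z P)) * (p P * q P) ∧
    dX x P = (1 + Real.cos (w P)) * p P / 4 ∧
    dY x P = -((1 + Real.cos (z P)) * q P) / 4 ∧
    dX t P = (1 + Real.cos (w P)) * p P / (4 * c (u P)) ∧
    dY t P = (1 + Real.cos (z P)) * q P / (4 * c (u P))

/-- All seven components are smooth on the whole plane. -/
def Smooth7 (u w z p q x t : ℝ × ℝ → ℝ) : Prop :=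
  ContDiff ℝ (⊤ : ℕ∞) u ∧ ContDiff ℝ (⊤ : ℕ∞) w ∧ ContDiff ℝ (⊤ : ℕ∞) z ∧
  ContDiff ℝ (⊤ : ℕ∞) p ∧ ContDiff ℝ (⊤ : ℕ∞) q ∧ ContDiff ℝ (⊤ : ℕ∞) x ∧
  ContDiff ℝ (⊤ : ℕ∞) t

open Real

variable {E : Type*} [NormedAddCommGroup E] [NormedSpace ℝ E] {f g a b : E → ℝ} {P : E}

theorem fderiv_one_add_cos_mul_div_four_apply (hf : DifferentiableAt ℝ f P)
    (hg : DifferentiableAt ℝ g P) (v : E) :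
    fderiv ℝ (fun y => (1 + cos (f y)) * g y / 4) P v =
      (-sin (f P) * fderiv ℝ f P v * g P + (1 + cos (f P)) * fderiv ℝ g P v) / 4 := by
  have h := ((hf.hasFDerivAt.cos.const_add 1).fun_mul hg.hasFDerivAt).mul_const (4⁻¹ : ℝ)
  simp only [div_eq_mul_inv, h.fderiv, smul_apply, add_apply, smul_eq_mul]
  ring

-- With `a = ∂ᵥf` and `b = ∂ᵥg`, the function differentiated here is `∂ᵥ((1 + cos f) g / 4)`.
theorem fderiv_neg_sin_mul_mul_add_one_add_cos_mul_div_four_apply_of_eq_pi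
    (hf : DifferentiableAt ℝ f P) (ha : DifferentiableAt ℝ a P) (hg : DifferentiableAt ℝ g P)
    (hb : DifferentiableAt ℝ b P) (hπ : f P = π) (v : E) :
    fderiv ℝ (fun y => (-sin (f y) * a y * g y + (1 + cos (f y)) * b y) / 4) P v =
      fderiv ℝ f P v * a P * g P / 4 := by
  have h := (((hf.hasFDerivAt.sin.fun_neg.fun_mul ha.hasFDerivAt).fun_mul hg.hasFDerivAt).fun_add
    ((hf.hasFDerivAt.cos.const_add 1).fun_mul hb.hasFDerivAt)).mul_const (4⁻¹ : ℝ)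
  simp only [div_eq_mul_inv, h.fderiv, smul_apply, add_apply, neg_apply, smul_eq_mul, hπ, sin_pi,
    cos_pi]
  ring

theorem ContDiff.differentiable_fderiv_apply (hf : ContDiff ℝ (⊤ : ℕ∞) f) (v : E) :
    Differentiable ℝ (fun y => fderiv ℝ f y v) :=
  ((hf.fderiv_right (m := 1) (by norm_cast)).clm_apply contDiff_const).differentiable
    one_ne_zero

theorem x_derivatives_at_type1_point_general
    (c : ℝ → ℝ)
    (u w z p q x t : ℝ × ℝ → ℝ)
    (hsmooth : Smooth7 u w z p q x t)
    (hsys : SolvesSystem c u w z p q x t)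
    (X₀ Y₀ : ℝ) (hwπ : w (X₀, Y₀) = Real.pi)
    (z₀ p₀ q₀ : ℝ)
    (hz₀ : z₀ = z (X₀, Y₀)) (hp₀ : p₀ = p (X₀, Y₀)) (hq₀ : q₀ = q (X₀, Y₀)) :
    dX x (X₀, Y₀) = 0 ∧
    dY x (X₀, Y₀) = -((1 + Real.cos z₀) * q₀) / 4 ∧
    dX (dX x) (X₀, Y₀) = 0 ∧
    dY (dX x) (X₀, Y₀) = 0 ∧
    dX (dX (dX x)) (X₀, Y₀) = dX w (X₀, Y₀) ^ 2 * p₀ / 4 := by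
  obtain ⟨-, hw, -, hp, -, -, -⟩ := hsmooth
  have hw₁ := hw.differentiable (by simp)
  have hp₁ := hp.differentiable (by simp)
  have hxX : dX x = fun P => (1 + cos (w P)) * p P / 4 := funext fun P => (hsys P).2.2.2.2.2.2.1
  have hxX_deriv (P : ℝ × ℝ) (v : ℝ × ℝ) : fderiv ℝ (dX x) P v =
      (-sin (w P) * fderiv ℝ w P v * p P + (1 + cos (w P)) * fderiv ℝ p P v) / 4 := by
    rw [hxX]
    exact fderiv_one_add_cos_mul_div_four_apply (hw₁ P) (hp₁ P) v
  have hxXX : dX (dX x) = fun P => (-sin (w P) * dX w P * p P + (1 + cos (w P)) * dX p P) / 4 :=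
    funext fun P => hxX_deriv P (1, 0)
  refine ⟨?_, ?_, ?_, ?_, ?_⟩
  · simp [hxX, hwπ]
  · rw [(hsys (X₀, Y₀)).2.2.2.2.2.2.2.1, hz₀, hq₀]
  · rw [dX, hxX_deriv, hwπ]
    simp
  · rw [dY, hxX_deriv, hwπ]
    simp
  · rw [hxXX, hp₀, sq]
    exact fderiv_neg_sin_mul_mul_add_one_add_cos_mul_div_four_apply_of_eq_pi (a := dX w)
      (b := dX p) (hw₁ _) (hw.differentiable_fderiv_apply _ _) (hp₁ _)
      (hp.differentiable_fderiv_apply _ _) hwπ (1, 0)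

/-- partial derivatives of `x` at a point where `w = π`. -/
theorem x_derivatives_at_type1_point
    (c : ℝ → ℝ) (c₀ : ℝ) (hc₀ : 0 < c₀) (hc : ContDiff ℝ (⊤ : ℕ∞) c)
    (hclb : ∀ v, c₀ ≤ c v)
    (u w z p q x t : ℝ × ℝ → ℝ)
    (hsmooth : Smooth7 u w z p q x t)
    (hsys : SolvesSystem c u w z p q x t)
    (X₀ Y₀ : ℝ) (hwπ : w (X₀, Y₀) = Real.pi)
    (z₀ p₀ q₀ : ℝ)
    (hz₀ : z₀ = z (X₀, Y₀)) (hp₀ : p₀ = p (X₀, Y₀)) (hq₀ : q₀ = q (X₀, Y₀)) :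
    dX x (X₀, Y₀) = 0 ∧
    dY x (X₀, Y₀) = -((1 + Real.cos z₀) * q₀) / 4 ∧
    dX (dX x) (X₀, Y₀) = 0 ∧
    dY (dX x) (X₀, Y₀) = 0 ∧
    dX (dX (dX x)) (X₀, Y₀) = dX w (X₀, Y₀) ^ 2 * p₀ / 4 :=
  x_derivatives_at_type1_point_general c u w z p q x t hsmooth hsys X₀ Y₀ hwπ z₀ p₀ q₀ hz₀ hp₀ hq₀
end

section
/- Let c : ℝ → ℝ be smooth with c(v) ≥ c₀ > 0, and let u, w, z, p, q, x, t : ℝ² → ℝ be smooth functions solving the semilinear system. Let (X₀,Y₀) be a point where w(X₀,Y₀) = π and w_X(X₀,Y₀) = 0, and write u₀ = u(X₀,Y₀), z₀ = z(X₀,Y₀), p₀ = p(X₀,Y₀), q₀ = q(X₀,Y₀). Then at (X₀,Y₀): x_X = x_XX = x_XXX = x_XXXX = x_XY = x_XXY = 0, x_XXXXX = 3·w_XX(X₀,Y₀)²·p₀/4, x_Y = −(1+cos z₀)·q₀/4; and t_X = t_XX = t_XXX = t_XXXX = t_XY = t_XXY = 0, t_XXXXX = 3·w_XX(X₀,Y₀)²·p₀/(4c(u₀)),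 t_Y = (1+cos z₀)·q₀/(4c(u₀)). -/
open Real
open scoped ContDiff

theorem one_add_cos_mul_eq {α : Type*} (W Q : α → ℝ) :
    (fun a => (1 + cos (W a)) * Q a) =
      (fun a => cos (W a / 2)) * (fun a => cos (W a / 2)) * fun a => 2 * Q a := by
  ext a
  have h := cos_sq (W a / 2)
  rw [mul_div_cancel₀ _ two_ne_zero] at h
  simp only [Pi.mul_apply]
  linear_combination (-2 * Q a) * h

section OneVariable

variable {𝕜 : Type*} [NontriviallyNormedField 𝕜] {g h : 𝕜 → 𝕜} {a : 𝕜}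

theorem iteratedDeriv_mul_self_of_le_four (hg : ContDiffAt 𝕜 4 g a) (hg0 : g a = 0)
    (hg1 : deriv g a = 0) {n : ℕ} (hn : n ≤ 4) :
    iteratedDeriv n (g * g) a = if n = 4 then 6 * iteratedDeriv 2 g a ^ 2 else 0 := by
  have hgn : ContDiffAt 𝕜 n g a := hg.of_le (by exact_mod_cast hn)
  rw [iteratedDeriv_mul hgn hgn]
  interval_cases n <;> norm_num [Finset.sum_range_succ, hg0, hg1, Nat.choose, sq, mul_assoc]

theorem iteratedDeriv_mul_self_mul_of_le_four (hg : ContDiffAt 𝕜 4 g a)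
    (hh : ContDiffAt 𝕜 4 h a) (hg0 : g a = 0) (hg1 : deriv g a = 0) {n : ℕ} (hn : n ≤ 4) :
    iteratedDeriv n (g * g * h) a = if n = 4 then 6 * iteratedDeriv 2 g a ^ 2 * h a else 0 := by
  have hn' : (n : WithTop ℕ∞) ≤ 4 := by exact_mod_cast hn
  have hgg : ContDiffAt 𝕜 n (g * g) a := (hg.mul hg).of_le hn'
  rw [iteratedDeriv_mul hgg (hh.of_le hn')]
  interval_cases n <;>
    simp [Finset.sum_range_succ, iteratedDeriv_mul_self_of_le_four hg hg0 hg1]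

end OneVariable

theorem iteratedDeriv_one_add_cos_mul_of_le_four {W Q : ℝ → ℝ} {a : ℝ} (hW : ContDiff ℝ 4 W)
    (hQ : ContDiff ℝ 4 Q) (hWa : W a = π) (hW1 : deriv W a = 0) {n : ℕ} (hn : n ≤ 4) :
    iteratedDeriv n (fun s => (1 + cos (W s)) * Q s) a =
      if n = 4 then 3 * iteratedDeriv 2 W a ^ 2 * Q a else 0 := by
  set g : ℝ → ℝ := fun s => cos (W s / 2)
  have hWd : Differentiable ℝ W := hW.differentiable (by norm_num)
  have hW'd : Differentiable ℝ (deriv W) := (hW.of_le (by norm_num)).differentiable_deriv_two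
  have hg' : ∀ s, HasDerivAt g (-sin (W s / 2) * (deriv W s / 2)) s := fun s =>
    ((hWd s).hasDerivAt.div_const 2).cos
  have hg0 : g a = 0 := by simp [g, hWa]
  have hg1 : deriv g a = 0 := by simp [(hg' a).deriv, hW1]
  have hg2 : iteratedDeriv 2 g a = -(iteratedDeriv 2 W a / 2) := by
    have hd : HasDerivAt (fun s => -sin (W s / 2) * (deriv W s / 2))
        (-(cos (W a / 2) * (deriv W a / 2)) * (deriv W a / 2)
          + -sin (W a / 2) * (iteratedDeriv 2 W a / 2)) a := by
      rw [iteratedDeriv_succ, iteratedDeriv_one]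
      exact (((hWd a).hasDerivAt.div_const 2).sin.neg).mul ((hW'd a).hasDerivAt.div_const 2)
    rw [iteratedDeriv_succ, iteratedDeriv_one, funext fun s => (hg' s).deriv, hd.deriv, hWa, hW1]
    simp
  have hg : ContDiff ℝ 4 g := contDiff_cos.comp (hW.div_const 2)
  rw [one_add_cos_mul_eq, iteratedDeriv_mul_self_mul_of_le_four hg.contDiffAt
    (contDiff_const.mul hQ).contDiffAt hg0 hg1 hn, hg2]
  split_ifs <;> ring

section Partials

variable {f k : ℝ × ℝ → ℝ}

theorem hasDerivAt_dX {a b : ℝ} (hf : DifferentiableAt ℝ f (a, b)) :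
    HasDerivAt (fun s => f (s, b)) (dX f (a, b)) a :=
  hf.hasFDerivAt.comp_hasDerivAt a ((hasDerivAt_id a).prodMk (hasDerivAt_const a b))

theorem dX_eq_deriv {a b : ℝ} (hf : DifferentiableAt ℝ f (a, b)) :
    dX f (a, b) = deriv (fun s => f (s, b)) a :=
  (hasDerivAt_dX hf).deriv.symm

theorem contDiff_dX {n : WithTop ℕ∞} (hf : ContDiff ℝ (n + 1) f) : ContDiff ℝ n (dX f) :=
  (contDiff_succ_iff_fderiv.mp hf).2.2.clm_apply contDiff_const

theorem iterate_dX_apply_eq_iteratedDeriv (hf : ContDiff ℝ ∞ f) (n : ℕ) (a b : ℝ) :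
    dX^[n] f (a, b) = iteratedDeriv n (fun s => f (s, b)) a := by
  induction n generalizing f with
  | zero => simp
  | succ n ih =>
    have hline : (fun s => dX f (s, b)) = deriv (fun s => f (s, b)) :=
      funext fun s => dX_eq_deriv ((hf.differentiable (by simp)) _)
    rw [Function.iterate_succ_apply, ih (contDiff_dX (by simpa using hf)), hline,
      iteratedDeriv_succ']

theorem dX_mul {P : ℝ × ℝ} (hf : DifferentiableAt ℝ f P) (hk : DifferentiableAt ℝ k P) :
    dX (f * k) P = dX f P * k P + f P * dX k P := by
  simp [dX, fderiv_mul hf hk]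
  ring

theorem dY_mul {P : ℝ × ℝ} (hf : DifferentiableAt ℝ f P) (hk : DifferentiableAt ℝ k P) :
    dY (f * k) P = dY f P * k P + f P * dY k P := by
  simp [dY, fderiv_mul hf hk]
  ring

theorem dY_add {P : ℝ × ℝ} (hf : DifferentiableAt ℝ f P) (hk : DifferentiableAt ℝ k P) :
    dY (f + k) P = dY f P + dY k P := by
  simp [dY, fderiv_add hf hk]

theorem dY_dX_mul_eq_zero (hf : ContDiff ℝ 2 f) (hk : ContDiff ℝ 2 k) {P : ℝ × ℝ}
    (hf0 : f P = 0) (hk0 : k P = 0) (hfX : dX f P = 0) (hkX : dX k P = 0) :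
    dY (dX (f * k)) P = 0 := by
  have hfd : Differentiable ℝ f := hf.differentiable (by simp)
  have hkd : Differentiable ℝ k := hk.differentiable (by simp)
  have hfXd : Differentiable ℝ (dX f) := (contDiff_dX hf).differentiable one_ne_zero
  have hkXd : Differentiable ℝ (dX k) := (contDiff_dX hk).differentiable one_ne_zero
  have hprod : dX (f * k) = dX f * k + f * dX k := funext fun Q => dX_mul (hfd Q) (hkd Q)
  rw [hprod, dY_add ((hfXd P).mul (hkd P)) ((hfd P).mul (hkXd P)),
    dY_mul (hfXd P) (hkd P), dY_mul (hfd P) (hkXd P), hf0, hk0, hfX, hkX]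
  ring

end Partials

section TypeTwoPoint

variable {w Q : ℝ × ℝ → ℝ} {X₀ Y₀ : ℝ}

theorem iterate_dX_one_add_cos_mul_of_le_four (hw : ContDiff ℝ ∞ w) (hQ : ContDiff ℝ ∞ Q)
    (hwπ : w (X₀, Y₀) = π) (hwX : dX w (X₀, Y₀) = 0) {n : ℕ} (hn : n ≤ 4) :
    dX^[n] (fun P => (1 + cos (w P)) * Q P) (X₀, Y₀) =
      if n = 4 then 3 * dX (dX w) (X₀, Y₀) ^ 2 * Q (X₀, Y₀) else 0 := by
  have hline : ContDiff ℝ ∞ fun s : ℝ => (s, Y₀) := contDiff_id.prodMk contDiff_const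
  have hF : ContDiff ℝ ∞ fun P => (1 + cos (w P)) * Q P :=
    (contDiff_const.add (contDiff_cos.comp hw)).mul hQ
  have hW : ContDiff ℝ 4 fun s => w (s, Y₀) := (hw.comp hline).of_le ENat.LEInfty.out
  have hQ' : ContDiff ℝ 4 fun s => Q (s, Y₀) := (hQ.comp hline).of_le ENat.LEInfty.out
  have hwX' : deriv (fun s => w (s, Y₀)) X₀ = 0 :=
    (dX_eq_deriv ((hw.differentiable (by simp)) _)).symm.trans hwX
  rw [iterate_dX_apply_eq_iteratedDeriv hF,
    iteratedDeriv_one_add_cos_mul_of_le_four hW hQ' hwπ hwX' hn,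
    ← iterate_dX_apply_eq_iteratedDeriv hw 2]
  rfl

theorem dX_cos_half_eq_zero (hw : Differentiable ℝ w) (hwX : dX w (X₀, Y₀) = 0) :
    dX (fun P => cos (w P / 2)) (X₀, Y₀) = 0 := by
  have hg : Differentiable ℝ fun P => cos (w P / 2) := by fun_prop
  rw [dX_eq_deriv (hg _), ((hasDerivAt_dX (hw _)).div_const 2).cos.deriv, hwX]
  simp

theorem dY_one_add_cos_mul_eq_zero (hw : Differentiable ℝ w) (hQ : Differentiable ℝ Q)
    (hwπ : w (X₀, Y₀) = π) : dY (fun P => (1 + cos (w P)) * Q P) (X₀, Y₀) = 0 := by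
  have hg : Differentiable ℝ fun P => cos (w P / 2) := by fun_prop
  have hh : Differentiable ℝ fun P => 2 * Q P := by fun_prop
  rw [one_add_cos_mul_eq, mul_assoc, dY_mul (hg _) ((hg _).mul (hh _))]
  simp [hwπ]

theorem dY_dX_one_add_cos_mul_eq_zero (hw : ContDiff ℝ ∞ w) (hQ : ContDiff ℝ ∞ Q)
    (hwπ : w (X₀, Y₀) = π) (hwX : dX w (X₀, Y₀) = 0) :
    dY (dX fun P => (1 + cos (w P)) * Q P) (X₀, Y₀) = 0 := by
  set g : ℝ × ℝ → ℝ := fun P => cos (w P / 2)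
  set h : ℝ × ℝ → ℝ := fun P => 2 * Q P
  have hg : ContDiff ℝ ∞ g := contDiff_cos.comp (hw.div_const 2)
  have hh : ContDiff ℝ ∞ h := contDiff_const.mul hQ
  have hg0 : g (X₀, Y₀) = 0 := by simp [g, hwπ]
  have hgX : dX g (X₀, Y₀) = 0 := dX_cos_half_eq_zero (hw.differentiable (by simp)) hwX
  have hghX : dX (g * h) (X₀, Y₀) = 0 := by
    rw [dX_mul (hg.differentiable (by simp) _) (hh.differentiable (by simp) _), hg0, hgX]
    ring
  rw [one_add_cos_mul_eq, mul_assoc]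
  exact dY_dX_mul_eq_zero (hg.of_le ENat.LEInfty.out) ((hg.mul hh).of_le ENat.LEInfty.out)
    hg0 (by simp [hg0]) hgX hghX

theorem derivatives_of_dX_eq_one_add_cos_mul {φ : ℝ × ℝ → ℝ} (hw : ContDiff ℝ ∞ w)
    (hQ : ContDiff ℝ ∞ Q) (hwπ : w (X₀, Y₀) = π) (hwX : dX w (X₀, Y₀) = 0)
    (hφ : dX φ = fun P => (1 + cos (w P)) * Q P) :
    dX φ (X₀, Y₀) = 0 ∧ dX (dX φ) (X₀, Y₀) = 0 ∧ dX (dX (dX φ)) (X₀, Y₀) = 0 ∧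
      dX (dX (dX (dX φ))) (X₀, Y₀) = 0 ∧ dY (dX φ) (X₀, Y₀) = 0 ∧
      dY (dX (dX φ)) (X₀, Y₀) = 0 ∧
      dX (dX (dX (dX (dX φ)))) (X₀, Y₀) = 3 * dX (dX w) (X₀, Y₀) ^ 2 * Q (X₀, Y₀) := by
  have hXn := fun n => iterate_dX_one_add_cos_mul_of_le_four (n := n) hw hQ hwπ hwX
  rw [hφ]
  exact ⟨hXn 0 (by norm_num), hXn 1 (by norm_num), hXn 2 (by norm_num), hXn 3 (by norm_num),
    dY_one_add_cos_mul_eq_zero (hw.differentiable (by simp)) (hQ.differentiable (by simp)) hwπ,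
    dY_dX_one_add_cos_mul_eq_zero hw hQ hwπ hwX,
    hXn 4 le_rfl⟩

end TypeTwoPoint

/-- partial derivatives of `x` and `t` at a Type 2 point
(`w = π`, `w_X = 0`). -/
theorem xt_derivatives_at_type2_point
    (c : ℝ → ℝ) (c₀ : ℝ) (hc₀ : 0 < c₀) (hc : ContDiff ℝ (⊤ : ℕ∞) c)
    (hclb : ∀ v, c₀ ≤ c v)
    (u w z p q x t : ℝ × ℝ → ℝ)
    (hsmooth : Smooth7 u w z p q x t)
    (hsys : SolvesSystem c u w z p q x t)
    (X₀ Y₀ : ℝ) (hwπ : w (X₀, Y₀) = Real.pi) (hwX : dX w (X₀, Y₀) = 0)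
    (u₀ z₀ p₀ q₀ : ℝ)
    (hu₀ : u₀ = u (X₀, Y₀)) (hz₀ : z₀ = z (X₀, Y₀))
    (hp₀ : p₀ = p (X₀, Y₀)) (hq₀ : q₀ = q (X₀, Y₀)) :
    dX x (X₀, Y₀) = 0 ∧
    dX (dX x) (X₀, Y₀) = 0 ∧
    dX (dX (dX x)) (X₀, Y₀) = 0 ∧
    dX (dX (dX (dX x))) (X₀, Y₀) = 0 ∧
    dY (dX x) (X₀, Y₀) = 0 ∧
    dY (dX (dX x)) (X₀, Y₀) = 0 ∧
    dX (dX (dX (dX (dX x)))) (X₀, Y₀) = 3 * dX (dX w) (X₀, Y₀) ^ 2 * p₀ / 4 ∧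
    dY x (X₀, Y₀) = -((1 + Real.cos z₀) * q₀) / 4 ∧
    dX t (X₀, Y₀) = 0 ∧
    dX (dX t) (X₀, Y₀) = 0 ∧
    dX (dX (dX t)) (X₀, Y₀) = 0 ∧
    dX (dX (dX (dX t))) (X₀, Y₀) = 0 ∧
    dY (dX t) (X₀, Y₀) = 0 ∧
    dY (dX (dX t)) (X₀, Y₀) = 0 ∧
    dX (dX (dX (dX (dX t)))) (X₀, Y₀) = 3 * dX (dX w) (X₀, Y₀) ^ 2 * p₀ / (4 * c u₀) ∧
    dY t (X₀, Y₀) = (1 + Real.cos z₀) * q₀ / (4 * c u₀) := by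
  obtain ⟨hu, hw, -, hp, -, -, -⟩ := hsmooth
  have hpc : ContDiff ℝ ∞ fun P => p P / (4 * c (u P)) :=
    hp.div (contDiff_const.mul (hc.comp hu)) fun P =>
      (mul_pos four_pos (hc₀.trans_le (hclb _))).ne'
  have hxX : dX x = fun P => (1 + cos (w P)) * (p P / 4) :=
    funext fun P => ((hsys P).2.2.2.2.2.2.1).trans (mul_div_assoc _ _ _)
  have htX : dX t = fun P => (1 + cos (w P)) * (p P / (4 * c (u P))) :=
    funext fun P => ((hsys P).2.2.2.2.2.2.2.2.1).trans (mul_div_assoc _ _ _)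
  obtain ⟨x1, x2, x3, x4, xY1, xY2, x5⟩ :=
    derivatives_of_dX_eq_one_add_cos_mul hw (hp.div_const 4) hwπ hwX hxX
  obtain ⟨t1, t2, t3, t4, tY1, tY2, t5⟩ :=
    derivatives_of_dX_eq_one_add_cos_mul hw hpc hwπ hwX htX
  subst hu₀ hz₀ hp₀ hq₀
  exact ⟨x1, x2, x3, x4, xY1, xY2, x5.trans (by ring), (hsys _).2.2.2.2.2.2.2.1,
    t1, t2, t3, t4, tY1, tY2, t5.trans (by ring), (hsys _).2.2.2.2.2.2.2.2.2⟩
end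

section
/- Let c : ℝ → ℝ be smooth with c(v) ≥ c₀ > 0, and let u, w, z, p, q, x, t : ℝ² → ℝ be smooth functions solving the semilinear system. Let (X₀,Y₀) be a point where w(X₀,Y₀) = π, w_X(X₀,Y₀) = 0, cos z(X₀,Y₀) > −1, p(X₀,Y₀) > 0, q(X₀,Y₀) > 0, c'(u(X₀,Y₀)) ≠ 0, and κ := −w_XX(X₀,Y₀)/(2·w_Y(X₀,Y₀)) > 0. Write t₀ = t(X₀,Y₀). Then there exist a neighborhood N of (X₀,Y₀) and ε > 0 such that: (a) for every τ with t₀ − ε < τ < t₀, no point (X,Y) ∈ N satisfies both w(X,Y) = π and t(X,Y) = τ; (b) the only point (X,Y) ∈ N with w(X,Y) = π and t(X,Y) = t₀ is (X₀,Y₀); (c) for every τ with t₀ < τ < t₀ + ε, there are exactly two points (X,Y) ∈ N with w(X,Y) = π and t(X,Y) = τ. -/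
open Filter Topology Set

lemma fderiv_apply_eq_dX_dY (f : ℝ × ℝ → ℝ) (P v : ℝ × ℝ) :
    fderiv ℝ f P v = v.1 * dX f P + v.2 * dY f P := by
  obtain ⟨a, b⟩ := v
  have hv : ((a, b) : ℝ × ℝ) = a • (1, 0) + b • (0, 1) := by simp
  rw [hv, map_add, map_smul, map_smul, ← hv]
  rfl

lemma HasDerivAt.comp_dX_dY {f : ℝ × ℝ → ℝ} {γ : ℝ → ℝ × ℝ} {v : ℝ × ℝ} {s : ℝ}
    (hγ : HasDerivAt γ v s) (hf : DifferentiableAt ℝ f (γ s)) :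
    HasDerivAt (fun s => f (γ s)) (v.1 * dX f (γ s) + v.2 * dY f (γ s)) s := by
  simpa [Function.comp_def, fderiv_apply_eq_dX_dY] using hf.hasFDerivAt.comp_hasDerivAt s hγ

lemma ContDiff.dX {n : WithTop ℕ∞} {f : ℝ × ℝ → ℝ} (hf : ContDiff ℝ (n + 1) f) :
    ContDiff ℝ n (dX f) :=
  (hf.contDiff_fderiv_apply le_rfl).comp (contDiff_id.prodMk contDiff_const)

lemma ContDiff.dY {n : WithTop ℕ∞} {f : ℝ × ℝ → ℝ} (hf : ContDiff ℝ (n + 1) f) :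
    ContDiff ℝ n (dY f) :=
  (hf.contDiff_fderiv_apply le_rfl).comp (contDiff_id.prodMk contDiff_const)

lemma isInvertible_fderiv_comp_inr {f : ℝ × ℝ → ℝ} {P : ℝ × ℝ} (h : dY f P ≠ 0) :
    (fderiv ℝ f P ∘L .inr ℝ ℝ ℝ).IsInvertible := by
  refine .of_inverse (g := (dY f P)⁻¹ • .id ℝ ℝ) ?_ ?_ <;>
  · ext
    simpa [dY] using inv_mul_cancel₀ h

lemma HasDerivAt.eq_neg_dX_div_dY {f : ℝ × ℝ → ℝ} {ψ : ℝ → ℝ} {X ψ' c : ℝ}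
    (hf : DifferentiableAt ℝ f (X, ψ X)) (hψ : HasDerivAt ψ ψ' X)
    (hc : ∀ᶠ s in 𝓝 X, f (s, ψ s) = c) (hY : dY f (X, ψ X) ≠ 0) :
    ψ' = -dX f (X, ψ X) / dY f (X, ψ X) := by
  have hcomp := ((hasDerivAt_id X).prodMk hψ).comp_dX_dY hf
  have hzero := hcomp.unique ((hasDerivAt_const X c).congr_of_eventuallyEq hc)
  simp only [id, one_mul] at hzero
  field_simp
  linarith

lemma exists_implicit_graph {f : ℝ × ℝ → ℝ} {P₀ : ℝ × ℝ} (hf : ContDiff ℝ 1 f)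
    (hY : dY f P₀ ≠ 0) :
    ∃ ψ : ℝ → ℝ, ψ P₀.1 = P₀.2 ∧ (∀ᶠ P in 𝓝 P₀, f P = f P₀ ↔ ψ P.1 = P.2) ∧
      ∀ᶠ X in 𝓝 P₀.1, f (X, ψ X) = f P₀ ∧ HasDerivAt ψ (-dX f (X, ψ X) / dY f (X, ψ X)) X := by
  set ψ := hf.contDiffAt.implicitFunction one_ne_zero (isInvertible_fderiv_comp_inr hY)
  have hψ₀ : ψ P₀.1 = P₀.2 := ContDiffAt.implicitFunction_apply_self ..
  have hlevel : ∀ᶠ X in 𝓝 P₀.1, f (X, ψ X) = f P₀ :=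
    ContDiffAt.eventually_apply_implicitFunction ..
  have hψC1 : ContDiffAt ℝ 1 ψ P₀.1 := ContDiffAt.contDiffAt_implicitFunction ..
  have hgraph : ContinuousAt (fun X => (X, ψ X)) P₀.1 :=
    continuousAt_id.prodMk hψC1.continuousAt
  have hYne : ∀ᶠ X in 𝓝 P₀.1, dY f (X, ψ X) ≠ 0 := by
    refine ((ContDiff.dY (n := 0) hf).continuous.continuousAt.comp hgraph).eventually_ne ?_
    simpa [hψ₀] using hY
  refine ⟨ψ, hψ₀, ContDiffAt.eventually_apply_eq_iff_implicitFunction .., ?_⟩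
  filter_upwards [hlevel, hlevel.eventually_nhds, hψC1.eventually (by simp), hYne]
    with X hX hXnhds hψX hYX
  have hψ' := (hψX.differentiableAt one_ne_zero).hasDerivAt
  refine ⟨hX, ?_⟩
  rwa [← hψ'.eq_neg_dX_div_dY ((hf.differentiable one_ne_zero) _) hXnhds hYX]

lemma hasDerivAt_deriv_of_dX_eq_zero {f : ℝ × ℝ → ℝ} {ψ : ℝ → ℝ} {X₀ : ℝ} (hf : ContDiff ℝ 2 f)
    (hψ : ∀ᶠ X in 𝓝 X₀, HasDerivAt ψ (-dX f (X, ψ X) / dY f (X, ψ X)) X)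
    (hX : dX f (X₀, ψ X₀) = 0) (hY : dY f (X₀, ψ X₀) ≠ 0) :
    HasDerivAt (deriv ψ) (-dX (dX f) (X₀, ψ X₀) / dY f (X₀, ψ X₀)) X₀ := by
  have hψ₀ : HasDerivAt ψ 0 X₀ := by simpa [hX] using hψ.self_of_nhds
  have hγ : HasDerivAt (fun X => (X, ψ X)) (1, 0) X₀ := (hasDerivAt_id X₀).prodMk hψ₀
  have hXcurve := hγ.comp_dX_dY ((ContDiff.dX (n := 1) hf).differentiable one_ne_zero _)
  have hYcurve := hγ.comp_dX_dY ((ContDiff.dY (n := 1) hf).differentiable one_ne_zero _)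
  refine ((hXcurve.neg.div hYcurve hY).congr_deriv ?_).congr_of_eventuallyEq ?_
  · field_simp
    simp [hX]
  · filter_upwards [hψ] with X hX using hX.deriv

structure IsStrictValley (φ : ℝ → ℝ) (a x₀ b : ℝ) : Prop where
  left_lt : a < x₀
  lt_right : x₀ < b
  continuousOn : ContinuousOn φ (Icc a b)
  strictAntiOn : StrictAntiOn φ (Icc a x₀)
  strictMonoOn : StrictMonoOn φ (Icc x₀ b)

lemma exists_isStrictValley_of_sign_deriv {φ φ' : ℝ → ℝ} {x₀ : ℝ} {s : Set ℝ} (hs : s ∈ 𝓝 x₀)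
    (hφ : ∀ᶠ x in 𝓝 x₀, HasDerivAt φ (φ' x) x ∧ SignType.sign (φ' x) = SignType.sign (x - x₀)) :
    ∃ a b, Icc a b ⊆ s ∧ IsStrictValley φ a x₀ b := by
  obtain ⟨δ, hδ, hball⟩ := Metric.mem_nhds_iff.mp (inter_mem hs hφ)
  have hIcc : Icc (x₀ - δ / 2) (x₀ + δ / 2) ⊆ Metric.ball x₀ δ := by
    rw [Real.ball_eq_Ioo]
    exact Icc_subset_Ioo (by linarith) (by linarith)
  have hgood : ∀ x ∈ Icc (x₀ - δ / 2) (x₀ + δ / 2), x ∈ s ∧ HasDerivAt φ (φ' x) x ∧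
      SignType.sign (φ' x) = SignType.sign (x - x₀) := fun x hx => hball (hIcc hx)
  have hcont : ContinuousOn φ (Icc (x₀ - δ / 2) (x₀ + δ / 2)) := fun x hx =>
    (hgood x hx).2.1.continuousAt.continuousWithinAt
  refine ⟨_, _, fun x hx => (hgood x hx).1, by linarith, by linarith, hcont, ?_, ?_⟩
  · refine strictAntiOn_of_deriv_neg (convex_Icc _ _) (hcont.mono (Icc_subset_Icc_right
      (by linarith))) fun x hx => ?_
    rw [interior_Icc] at hx
    obtain ⟨-, hd, hsign⟩ := hgood x ⟨hx.1.le, by linarith [hx.2]⟩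
    rw [hd.deriv, ← sign_eq_neg_one_iff, hsign, sign_neg (sub_neg.mpr hx.2)]
  · refine strictMonoOn_of_deriv_pos (convex_Icc _ _) (hcont.mono (Icc_subset_Icc_left
      (by linarith))) fun x hx => ?_
    rw [interior_Icc] at hx
    obtain ⟨-, hd, hsign⟩ := hgood x ⟨by linarith [hx.1], hx.2.le⟩
    rw [hd.deriv, ← sign_eq_one_iff, hsign, sign_pos (sub_pos.mpr hx.1)]

namespace IsStrictValley

variable {φ : ℝ → ℝ} {a x₀ b : ℝ}

lemma apply_lt (h : IsStrictValley φ a x₀ b) {x : ℝ} (hx : x ∈ Icc a b) (hne : x ≠ x₀) :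
    φ x₀ < φ x := by
  rcases hne.lt_or_gt with hlt | hgt
  · exact h.strictAntiOn ⟨hx.1, hlt.le⟩ ⟨h.left_lt.le, le_rfl⟩ hlt
  · exact h.strictMonoOn ⟨le_rfl, h.lt_right.le⟩ ⟨hgt.le, hx.2⟩ hgt

lemma apply_le (h : IsStrictValley φ a x₀ b) {x : ℝ} (hx : x ∈ Icc a b) : φ x₀ ≤ φ x := by
  rcases eq_or_ne x x₀ with rfl | hne
  · exact le_rfl
  · exact (h.apply_lt hx hne).le

lemma apply_lt_left (h : IsStrictValley φ a x₀ b) : φ x₀ < φ a :=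
  h.apply_lt (left_mem_Icc.mpr (h.left_lt.trans h.lt_right).le) h.left_lt.ne

lemma apply_lt_right (h : IsStrictValley φ a x₀ b) : φ x₀ < φ b :=
  h.apply_lt (right_mem_Icc.mpr (h.left_lt.trans h.lt_right).le) h.lt_right.ne'

lemma setOf_apply_eq_bottom (h : IsStrictValley φ a x₀ b) :
    {x | x ∈ Ioo a b ∧ φ x = φ x₀} = {x₀} := by
  ext x
  refine ⟨fun ⟨hx, hφx⟩ => by_contra fun hne => (h.apply_lt (Ioo_subset_Icc_self hx) hne).ne' hφx,
    ?_⟩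
  rintro rfl
  exact ⟨⟨h.left_lt, h.lt_right⟩, rfl⟩

lemma exists_setOf_apply_eq_pair (h : IsStrictValley φ a x₀ b) {τ : ℝ} (hτ : φ x₀ < τ)
    (hτa : τ < φ a) (hτb : τ < φ b) :
    ∃ x₁ x₂, x₁ < x₂ ∧ {x | x ∈ Ioo a b ∧ φ x = τ} = {x₁, x₂} := by
  obtain ⟨x₁, hx₁, hφx₁⟩ := intermediate_value_Ioo' h.left_lt.le
    (h.continuousOn.mono (Icc_subset_Icc_right h.lt_right.le)) ⟨hτ, hτa⟩
  obtain ⟨x₂, hx₂, hφx₂⟩ := intermediate_value_Ioo h.lt_right.le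
    (h.continuousOn.mono (Icc_subset_Icc_left h.left_lt.le)) ⟨hτ, hτb⟩
  refine ⟨x₁, x₂, hx₁.2.trans hx₂.1, Set.ext fun x => ⟨?_, ?_⟩⟩
  · rintro ⟨hx, hφx⟩
    rcases lt_trichotomy x x₀ with hlt | rfl | hgt
    · exact Or.inl (h.strictAntiOn.injOn ⟨hx.1.le, hlt.le⟩ ⟨hx₁.1.le, hx₁.2.le⟩
        (hφx.trans hφx₁.symm))
    · exact absurd hφx hτ.ne
    · exact Or.inr (h.strictMonoOn.injOn ⟨hgt.le, hx.2.le⟩ ⟨hx₂.1.le, hx₂.2.le⟩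
        (hφx.trans hφx₂.symm))
  · rintro (rfl | rfl)
    · exact ⟨⟨hx₁.1, hx₁.2.trans h.lt_right⟩, hφx₁⟩
    · exact ⟨⟨h.left_lt.trans hx₂.1, hx₂.2⟩, hφx₂⟩

end IsStrictValley

lemma setOf_eq_image_graph {f g : ℝ × ℝ → ℝ} {ψ : ℝ → ℝ} {U : Set (ℝ × ℝ)} {I : Set ℝ}
    {c τ : ℝ} (hU : ∀ P ∈ U, f P = c ↔ ψ P.1 = P.2) (hI : ∀ X ∈ I, (X, ψ X) ∈ U) :
    {P | P ∈ U ∩ Prod.fst ⁻¹' I ∧ f P = c ∧ g P = τ} =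
      (fun X => (X, ψ X)) '' {X | X ∈ I ∧ g (X, ψ X) = τ} := by
  ext P
  constructor
  · rintro ⟨⟨hPU, hPI⟩, hf, hg⟩
    have hP : (P.1, ψ P.1) = P := by rw [(hU P hPU).mp hf]
    exact ⟨P.1, ⟨hPI, hP ▸ hg⟩, hP⟩
  · rintro ⟨X, ⟨hX, hg⟩, rfl⟩
    exact ⟨⟨hI X hX, hX⟩, (hU _ (hI X hX)).mpr rfl, hg⟩

lemma exists_isStrictValley_along_level_curve {w t : ℝ × ℝ → ℝ} {X₀ Y₀ : ℝ}
    (hw : ContDiff ℝ 2 w) (ht : ContDiff ℝ 1 t) (hwX : dX w (X₀, Y₀) = 0)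
    (hwY : dY w (X₀, Y₀) ≠ 0) (hwXX : 0 < -dX (dX w) (X₀, Y₀) / dY w (X₀, Y₀))
    (htY : 0 < dY t (X₀, Y₀)) (htX : ∀ P, w P = w (X₀, Y₀) → dX t P = 0) :
    ∃ (ψ : ℝ → ℝ) (U : Set (ℝ × ℝ)), IsOpen U ∧ (X₀, Y₀) ∈ U ∧ ψ X₀ = Y₀ ∧
      (∀ P ∈ U, w P = w (X₀, Y₀) ↔ ψ P.1 = P.2) ∧
      ∃ a b, Icc a b ⊆ (fun X => (X, ψ X)) ⁻¹' U ∧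
        IsStrictValley (fun X => t (X, ψ X)) a X₀ b := by
  obtain ⟨ψ, hψ₀, hU, hcurve⟩ := exists_implicit_graph (hw.of_le one_le_two) hwY
  obtain ⟨U, hUiff, hUo, hP₀U⟩ := eventually_nhds_iff.mp hU
  have hgraph : ContinuousAt (fun X => (X, ψ X)) X₀ :=
    continuousAt_id.prodMk hcurve.self_of_nhds.2.continuousAt
  have hψ'₀ : deriv ψ X₀ = 0 := by simpa [hψ₀, hwX] using hcurve.self_of_nhds.2.deriv
  have hψ'' : HasDerivAt (deriv ψ) (-dX (dX w) (X₀, Y₀) / dY w (X₀, Y₀)) X₀ := by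
    simpa [hψ₀] using hasDerivAt_deriv_of_dX_eq_zero hw (hcurve.mono fun _ h => h.2)
      (by simpa [hψ₀]) (by simpa [hψ₀])
  have hsign := eventually_nhdsWithin_sign_eq_of_deriv_pos (hψ''.deriv ▸ hwXX) hψ'₀
  have htY_near : ∀ᶠ X in 𝓝 X₀, 0 < dY t (X, ψ X) :=
    ((ContDiff.dY (n := 0) ht).continuous.continuousAt.comp hgraph).eventually
      (lt_mem_nhds (by simpa [hψ₀] using htY))
  refine ⟨ψ, U, hUo, hP₀U, hψ₀, hUiff,
    exists_isStrictValley_of_sign_deriv (φ' := fun X => deriv ψ X * dY t (X, ψ X))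
      (hgraph.preimage_mem_nhds (hUo.mem_nhds (by simpa [hψ₀]))) ?_⟩
  filter_upwards [hcurve, hsign, htY_near] with X ⟨hlevel, hψ'⟩ hsignX htYX
  refine ⟨?_, by rw [sign_mul, hsignX, sign_pos htYX, mul_one]⟩
  simpa [htX _ hlevel, hψ'.deriv] using
    ((hasDerivAt_id X).prodMk hψ').comp_dX_dY (ht.differentiable one_ne_zero _)

namespace SolvesSystem

variable {c : ℝ → ℝ} {u w z p q x t : ℝ × ℝ → ℝ} {P : ℝ × ℝ}

lemma dX_t_eq_zero (hsys : SolvesSystem c u w z p q x t) (hP : w P = Real.pi) : dX t P = 0 := by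
  simp [(hsys P).2.2.2.2.2.2.2.2.1, hP]

lemma dY_t_pos (hsys : SolvesSystem c u w z p q x t) (hcu : 0 < c (u P))
    (hz : -1 < Real.cos (z P)) (hq : 0 < q P) : 0 < dY t P := by
  rw [(hsys P).2.2.2.2.2.2.2.2.2]
  have : 0 < 1 + Real.cos (z P) := by linarith
  positivity

lemma dY_w_ne_zero (hsys : SolvesSystem c u w z p q x t) (hcu : c (u P) ≠ 0)
    (hP : w P = Real.pi) (hz : Real.cos (z P) ≠ -1) (hq : q P ≠ 0) (hc' : deriv c (u P) ≠ 0) :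
    dY w P ≠ 0 := by
  rw [(hsys P).2.2.1, hP, Real.cos_pi, sub_neg_eq_add]
  have : Real.cos (z P) + 1 ≠ 0 := fun h => hz (eq_neg_of_add_eq_zero_left h)
  positivity

end SolvesSystem

theorem two_singular_curves_originate_general
    (c : ℝ → ℝ) (c₀ : ℝ) (hc₀ : 0 < c₀)
    (hclb : ∀ v, c₀ ≤ c v)
    (u w z p q x t : ℝ × ℝ → ℝ)
    (hsmooth : Smooth7 u w z p q x t)
    (hsys : SolvesSystem c u w z p q x t)
    (X₀ Y₀ : ℝ) (hwπ : w (X₀, Y₀) = Real.pi) (hwX : dX w (X₀, Y₀) = 0)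
    (hz : Real.cos (z (X₀, Y₀)) > -1)
    (hq : q (X₀, Y₀) > 0)
    (hc' : deriv c (u (X₀, Y₀)) ≠ 0)
    (κ : ℝ) (hκ : κ = -dX (dX w) (X₀, Y₀) / (2 * dY w (X₀, Y₀))) (hκpos : κ > 0)
    (t₀ : ℝ) (ht₀ : t₀ = t (X₀, Y₀)) :
    ∃ N : Set (ℝ × ℝ), IsOpen N ∧ (X₀, Y₀) ∈ N ∧
      ∃ ε : ℝ, ε > 0 ∧
        (∀ τ : ℝ, t₀ - ε < τ → τ < t₀ →
          ∀ P ∈ N, ¬(w P = Real.pi ∧ t P = τ)) ∧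
        ({P : ℝ × ℝ | P ∈ N ∧ w P = Real.pi ∧ t P = t₀} = {(X₀, Y₀)}) ∧
        (∀ τ : ℝ, t₀ < τ → τ < t₀ + ε →
          ∃ P₁ P₂ : ℝ × ℝ, P₁ ≠ P₂ ∧
            {P : ℝ × ℝ | P ∈ N ∧ w P = Real.pi ∧ t P = τ} = {P₁, P₂}) := by
  obtain ⟨-, hw, -, -, -, -, ht⟩ := hsmooth
  have hcu : 0 < c (u (X₀, Y₀)) := hc₀.trans_le (hclb _)
  have hwXX : 0 < -dX (dX w) (X₀, Y₀) / dY w (X₀, Y₀) := by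
    rw [hκ, mul_comm, ← div_div] at hκpos
    linarith
  obtain ⟨ψ, U, hUo, hP₀U, hψ₀, hUψ, a, b, hψU, hvalley⟩ :=
    exists_isStrictValley_along_level_curve (hw.of_le (by norm_cast))
      (ht.of_le (by norm_cast)) hwX
      (hsys.dY_w_ne_zero hcu.ne' hwπ hz.ne' hq.ne' hc') hwXX (hsys.dY_t_pos hcu hz hq)
      fun P hP => hsys.dX_t_eq_zero (hP.trans hwπ)
  set φ : ℝ → ℝ := fun X => t (X, ψ X)
  have hφ₀ : φ X₀ = t₀ := by simp [φ, hψ₀, ht₀]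
  have hlevel (τ : ℝ) : {P | P ∈ U ∩ Prod.fst ⁻¹' Ioo a b ∧ w P = Real.pi ∧ t P = τ} =
      (fun X => (X, ψ X)) '' {X | X ∈ Ioo a b ∧ φ X = τ} :=
    hwπ ▸ setOf_eq_image_graph hUψ fun X hX => hψU (Ioo_subset_Icc_self hX)
  refine ⟨U ∩ Prod.fst ⁻¹' Ioo a b, hUo.inter (isOpen_Ioo.preimage continuous_fst),
    ⟨hP₀U, hvalley.left_lt, hvalley.lt_right⟩, min (φ a) (φ b) - t₀, ?_, ?_, ?_, ?_⟩
  · rw [← hφ₀]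
    exact sub_pos.mpr (lt_min hvalley.apply_lt_left hvalley.apply_lt_right)
  · rintro τ - hτ P hPN ⟨hPw, rfl⟩
    obtain ⟨X, ⟨hX, hφX⟩, rfl⟩ := (hlevel (t P)).subset ⟨hPN, hPw, rfl⟩
    exact (hvalley.apply_le (Ioo_subset_Icc_self hX)).not_gt (hφ₀ ▸ hφX ▸ hτ)
  · rw [hlevel, ← hφ₀, hvalley.setOf_apply_eq_bottom, image_singleton, hψ₀]
  · intro τ hτ hτε
    obtain ⟨X₁, X₂, hlt, hset⟩ := hvalley.exists_setOf_apply_eq_pair (hφ₀ ▸ hτ)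
      (by linarith [min_le_left (φ a) (φ b)]) (by linarith [min_le_right (φ a) (φ b)])
    exact ⟨_, _, fun h => hlt.ne (congrArg Prod.fst h), by rw [hlevel, hset, image_pair]⟩

/-- at a Type 2 singular point, for times slightly before `t₀`
there are no singular points, at `t₀` exactly one, and slightly after `t₀`
exactly two. -/
theorem two_singular_curves_originate
    (c : ℝ → ℝ) (c₀ : ℝ) (hc₀ : 0 < c₀) (hc : ContDiff ℝ (⊤ : ℕ∞) c)
    (hclb : ∀ v, c₀ ≤ c v)
    (u w z p q x t : ℝ × ℝ → ℝ)
    (hsmooth : Smooth7 u w z p q x t)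
    (hsys : SolvesSystem c u w z p q x t)
    (X₀ Y₀ : ℝ) (hwπ : w (X₀, Y₀) = Real.pi) (hwX : dX w (X₀, Y₀) = 0)
    (hz : Real.cos (z (X₀, Y₀)) > -1)
    (hp : p (X₀, Y₀) > 0) (hq : q (X₀, Y₀) > 0)
    (hc' : deriv c (u (X₀, Y₀)) ≠ 0)
    (κ : ℝ) (hκ : κ = -dX (dX w) (X₀, Y₀) / (2 * dY w (X₀, Y₀))) (hκpos : κ > 0)
    (t₀ : ℝ) (ht₀ : t₀ = t (X₀, Y₀)) :
    ∃ N : Set (ℝ × ℝ), IsOpen N ∧ (X₀, Y₀) ∈ N ∧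
      ∃ ε : ℝ, ε > 0 ∧
        (∀ τ : ℝ, t₀ - ε < τ → τ < t₀ →
          ∀ P ∈ N, ¬(w P = Real.pi ∧ t P = τ)) ∧
        ({P : ℝ × ℝ | P ∈ N ∧ w P = Real.pi ∧ t P = t₀} = {(X₀, Y₀)}) ∧
        (∀ τ : ℝ, t₀ < τ → τ < t₀ + ε →
          ∃ P₁ P₂ : ℝ × ℝ, P₁ ≠ P₂ ∧
            {P : ℝ × ℝ | P ∈ N ∧ w P = Real.pi ∧ t P = τ} = {P₁, P₂}) :=
  two_singular_curves_originate_general c c₀ hc₀ hclb u w z p q x t hsmooth hsys X₀ Y₀ hwπ hwX hz hq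
    hc' κ hκ hκpos t₀ ht₀
end
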